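/- Let H ⊆ {1,…,n} with |H| = n−f be the non-faulty agents and m := n−r. Suppose each ∇Q_i for i ∈ H is μ-Lipschitz (Assumption 1), for every S ⊆ H with |S| ≥ n−f the average Q_S is γ-strongly convex (Assumption 3), the non-faulty cost functions satisfy (f,r;ε)-redundancy, and α := ((n−f)γ − 2(f+r)μ)/((n−r)γ) > 0. Fix x ∈ ℝ^d, a set S ⊆ {1,…,n} with |S| = m, vectors g_j for j ∈ S with g_j = ∇Q_j(x) for every j ∈ S ∩ H (the g_j for j ∈ S∖H are arbitrary), and a CGE(m,f) selection T from {g_j}_{j∈S}. Then ⟨x − x_H, Σ_{j∈T} g_j⟩ ≥ α·m·γ·‖x − x_H‖·(‖x − x_H‖ − 4μ(f+r)ε/(αγ)), where x_H is the unique minimizer of Σ_{j∈H} Q_j. -/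

import Mathlib

/-!
Write `e = x - x_H`. Since the gradients of `∑_{j∈H} Q_j` vanish at `x_H`, strong convexity gives
`⟪e, ∑_{j∈H} ∇Q_j x⟫ ≥ |H| γ ‖e‖²`. The selected sum differs from `∑_{j∈H} ∇Q_j x` by at most
`f + r` honest gradients that were not selected and at most `f` faulty vectors that were; each of
the latter is, by the CGE ordering, no longer than some unselected honest gradient, because `S \ T`
has `f` elements and at most `f` agents are faulty. So everything reduces to bounding honest
gradients: `‖∇Q_k x‖ ≤ μ ‖e‖ + (2a + 1) μ ε` with `a = m - 2f`. Indeed `∇Q_k x_H` is the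
difference of the sums of `∇Q_i x_H` over `A ∪ {k}` and over `A` for an `a`-element
`A ⊆ H \ {k}`, and each such sum over `B` has norm at most `|B| μ ε`, because by redundancy
`∑_{i∈B} Q_i` has a minimiser within `ε` of `x_H` (minimisers are unique by strong convexity, so
the Hausdorff distance is the distance between the two minimisers).
-/

open Finset
open scoped RealInnerProductSpace

def minimizers {ι E : Type*} (s : Finset ι) (Q : ι → E → ℝ) : Set E :=
  {y | ∀ z, ∑ i ∈ s, Q i y ≤ ∑ i ∈ s, Q i z}

theorem dist_le_of_hausdorffDist_le {X : Type*} [PseudoMetricSpace X] {s t : Set X} {a b : X}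
    {ε : ℝ} (hs : s.Subsingleton) (ht : t.Subsingleton) (ha : a ∈ s) (hb : b ∈ t)
    (h : Metric.hausdorffDist s t ≤ ε) : dist a b ≤ ε := by
  rwa [hs.eq_singleton_of_mem ha, ht.eq_singleton_of_mem hb, Metric.hausdorffDist_singleton] at h

section

variable {ι E : Type*} [SeminormedAddCommGroup E]

theorem norm_sum_le_card_mul {s : Finset ι} {v : ι → E} {C : ℝ} (h : ∀ i ∈ s, ‖v i‖ ≤ C) :
    ‖∑ i ∈ s, v i‖ ≤ s.card * C := by
  simpa using norm_sum_le_of_le s h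

theorem norm_sum_sub_sum_le {s : Finset ι} {G : ι → E → E} {μ : ℝ} {y z : E}
    (h : ∀ i ∈ s, ‖G i y - G i z‖ ≤ μ * ‖y - z‖) :
    ‖∑ i ∈ s, G i y - ∑ i ∈ s, G i z‖ ≤ s.card * (μ * ‖y - z‖) := by
  rw [← sum_sub_distrib]
  exact norm_sum_le_card_mul h

theorem norm_le_of_norm_sum_le [DecidableEq ι] {H : Finset ι} {v : ι → E} {a : ℕ} {c : ℝ}
    (ha : a < H.card) (h : ∀ B ⊆ H, a ≤ B.card → ‖∑ i ∈ B, v i‖ ≤ B.card * c)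
    {k : ι} (hk : k ∈ H) : ‖v k‖ ≤ (2 * a + 1) * c := by
  obtain ⟨A, hAk, hAcard⟩ :=
    exists_subset_card_eq (s := H.erase k) (n := a) (by rw [card_erase_of_mem hk]; omega)
  have hkA : k ∉ A := fun hk' => notMem_erase k H (hAk hk')
  have hAH : A ⊆ H := hAk.trans (erase_subset k H)
  have hkAH : insert k A ⊆ H := insert_subset hk hAH
  have hvk : v k = ∑ i ∈ insert k A, v i - ∑ i ∈ A, v i := by
    rw [sum_insert hkA]; abel
  have h₁ := h (insert k A) hkAH (by rw [card_insert_of_notMem hkA]; omega)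
  have h₂ := h A hAH hAcard.ge
  rw [card_insert_of_notMem hkA, hAcard] at h₁
  rw [hAcard] at h₂
  calc ‖v k‖ ≤ ‖∑ i ∈ insert k A, v i‖ + ‖∑ i ∈ A, v i‖ := by rw [hvk]; exact norm_sub_le _ _
    _ ≤ ((a + 1 : ℕ) : ℝ) * c + a * c := add_le_add h₁ h₂
    _ = (2 * a + 1) * c := by push_cast; ring

end

section

variable {ι E : Type*} [NormedAddCommGroup E] [InnerProductSpace ℝ E]

theorem le_inner_sum_sub_sum_of_subset [DecidableEq ι] {H A : Finset ι} (hA : A ⊆ H)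
    {G : ι → E → E} {μ c : ℝ} {y z : E}
    (hH : c * ‖y - z‖ ^ 2 ≤ ⟪∑ i ∈ H, G i y - ∑ i ∈ H, G i z, y - z⟫)
    (hlip : ∀ i ∈ H \ A, ‖G i y - G i z‖ ≤ μ * ‖y - z‖) :
    (c - (H \ A).card * μ) * ‖y - z‖ ^ 2 ≤ ⟪∑ i ∈ A, G i y - ∑ i ∈ A, G i z, y - z⟫ := by
  have hrest : ⟪∑ i ∈ H \ A, G i y - ∑ i ∈ H \ A, G i z, y - z⟫ ≤
      (H \ A).card * μ * ‖y - z‖ ^ 2 :=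
    calc _ ≤ ‖∑ i ∈ H \ A, G i y - ∑ i ∈ H \ A, G i z‖ * ‖y - z‖ := real_inner_le_norm _ _
      _ ≤ (H \ A).card * (μ * ‖y - z‖) * ‖y - z‖ := by
        gcongr; exact norm_sum_sub_sum_le hlip
      _ = _ := by ring
  have hsplit : ∑ i ∈ A, G i y - ∑ i ∈ A, G i z =
      (∑ i ∈ H, G i y - ∑ i ∈ H, G i z) - (∑ i ∈ H \ A, G i y - ∑ i ∈ H \ A, G i z) := by
    rw [← sum_sdiff hA (f := fun i => G i y), ← sum_sdiff hA (f := fun i => G i z)]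
    abel
  rw [hsplit, inner_sub_left]
  linarith

theorem inner_sum_sub_le_inner_sum_of_cge [Fintype ι] [DecidableEq ι] {H S T : Finset ι}
    {u g : ι → E} {C : ℝ} (hTS : T ⊆ S) (hcompl : Hᶜ.card ≤ (S \ T).card)
    (hg : ∀ j ∈ S ∩ H, g j = u j) (hord : ∀ j ∈ T, ∀ k ∈ S \ T, ‖g j‖ ≤ ‖g k‖)
    (hC : ∀ k ∈ H \ T, ‖u k‖ ≤ C) (e : E) :
    ⟪e, ∑ j ∈ H, u j⟫ - ((H \ T).card + (T \ H).card) * C * ‖e‖ ≤ ⟪e, ∑ j ∈ T, g j⟫ := by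
  have hout : ∀ j ∈ T \ H, ‖g j‖ ≤ C := by
    intro j hj
    rw [mem_sdiff] at hj
    obtain ⟨k, hk⟩ : ((S \ T) ∩ H).Nonempty := by
      -- otherwise `j` and all of `S \ T` would be more than `#Hᶜ` agents outside `H`
      by_contra hempty
      have hsub : insert j (S \ T) ⊆ Hᶜ := by
        refine insert_subset (mem_compl.2 hj.2) fun i hi => mem_compl.2 fun hiH => ?_
        exact hempty ⟨i, mem_inter.2 ⟨hi, hiH⟩⟩
      have := card_le_card hsub
      rw [card_insert_of_notMem fun h => (mem_sdiff.1 h).2 hj.1] at this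
      omega
    rw [mem_inter, mem_sdiff] at hk
    calc ‖g j‖ ≤ ‖g k‖ := hord j hj.1 k (mem_sdiff.2 hk.1)
      _ = ‖u k‖ := by rw [hg k (mem_inter.2 ⟨hk.1.1, hk.2⟩)]
      _ ≤ C := hC k (mem_sdiff.2 ⟨hk.2, hk.1.2⟩)
  have hdecomp : ∑ j ∈ T, g j = ∑ j ∈ H, u j - ∑ j ∈ H \ T, u j + ∑ j ∈ T \ H, g j := by
    have hcommon : ∑ j ∈ T ∩ H, g j = ∑ j ∈ H ∩ T, u j := by
      rw [inter_comm]
      refine sum_congr rfl fun j hj => hg j ?_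
      rw [mem_inter] at hj ⊢
      exact ⟨hTS hj.2, hj.1⟩
    rw [← sum_inter_add_sum_sdiff T H, ← sum_inter_add_sum_sdiff H T, hcommon]
    abel
  have hin := (abs_real_inner_le_norm e (∑ j ∈ H \ T, u j)).trans
    (mul_le_mul_of_nonneg_left (norm_sum_le_card_mul hC) (norm_nonneg e))
  have hout' := (abs_real_inner_le_norm e (∑ j ∈ T \ H, g j)).trans
    (mul_le_mul_of_nonneg_left (norm_sum_le_card_mul hout) (norm_nonneg e))
  rw [hdecomp, inner_add_right, inner_sub_right]
  linarith [abs_le.1 hin, abs_le.1 hout']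

variable [CompleteSpace E]

theorem sum_gradient_eq_zero_of_mem_minimizers {s : Finset ι} {Q : ι → E → ℝ} {y : E}
    (hdiff : ∀ i ∈ s, DifferentiableAt ℝ (Q i) y) (hy : y ∈ minimizers s Q) :
    ∑ i ∈ s, gradient (Q i) y = 0 := by
  have hQ : HasGradientAt (fun z => ∑ i ∈ s, Q i z) (∑ i ∈ s, gradient (Q i) y) y := by
    rw [hasGradientAt_iff_hasFDerivAt, map_sum]
    exact HasFDerivAt.fun_sum fun i hi => (hdiff i hi).hasGradientAt.hasFDerivAt
  have hmin : IsLocalMin (fun z => ∑ i ∈ s, Q i z) y :=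
    (isMinOn_univ_iff.2 fun z => hy z).isLocalMin Filter.univ_mem
  exact (InnerProductSpace.toDual ℝ E).map_eq_zero_iff.1 (hmin.hasFDerivAt_eq_zero hQ.hasFDerivAt)

theorem subsingleton_minimizers {s : Finset ι} {Q : ι → E → ℝ} {c : ℝ} (hc : 0 < c)
    (hdiff : ∀ i ∈ s, ∀ y, DifferentiableAt ℝ (Q i) y)
    (hmono : ∀ y z, c * ‖y - z‖ ^ 2 ≤
      ⟪∑ i ∈ s, gradient (Q i) y - ∑ i ∈ s, gradient (Q i) z, y - z⟫) :
    (minimizers s Q).Subsingleton := by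
  intro y hy z hz
  have h := hmono y z
  rw [sum_gradient_eq_zero_of_mem_minimizers (fun i hi => hdiff i hi y) hy,
    sum_gradient_eq_zero_of_mem_minimizers (fun i hi => hdiff i hi z) hz, sub_zero,
    inner_zero_left] at h
  have : ‖y - z‖ ^ 2 ≤ 0 := nonpos_of_mul_nonpos_right h hc
  simpa [sub_eq_zero] using this

theorem norm_gradient_le_of_redundancy [DecidableEq ι] {H : Finset ι} {Q : ι → E → ℝ}
    {μ γ ε : ℝ} {a : ℕ} {xH : E} (hμ : 0 ≤ μ) (ha : a < H.card)
    (hgap : (H.card - a) * μ < H.card * γ)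
    (hdiff : ∀ i ∈ H, ∀ y, DifferentiableAt ℝ (Q i) y)
    (hlip : ∀ i ∈ H, ∀ y z, ‖gradient (Q i) y - gradient (Q i) z‖ ≤ μ * ‖y - z‖)
    (hsc : ∀ y z, H.card * γ * ‖y - z‖ ^ 2 ≤
      ⟪∑ i ∈ H, gradient (Q i) y - ∑ i ∈ H, gradient (Q i) z, y - z⟫)
    (hred : ∀ B ⊆ H, a ≤ B.card → (minimizers B Q).Nonempty ∧
      Metric.hausdorffDist (minimizers H Q) (minimizers B Q) ≤ ε)
    (hxH : xH ∈ minimizers H Q) {k : ι} (hk : k ∈ H) (x : E) :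
    ‖gradient (Q k) x‖ ≤ μ * ‖x - xH‖ + (2 * a + 1) * (μ * ε) := by
  have hunique : ∀ B ⊆ H, a ≤ B.card → (minimizers B Q).Subsingleton := by
    intro B hB hBa
    have hcard : ((H \ B).card : ℝ) ≤ H.card - a := by
      rw [card_sdiff_of_subset hB, Nat.cast_sub (card_le_card hB)]
      gcongr
    refine subsingleton_minimizers (c := H.card * γ - (H \ B).card * μ) (by nlinarith)
      (fun i hi => hdiff i (hB hi)) fun y z => ?_
    exact le_inner_sum_sub_sum_of_subset hB (hsc y z) fun i hi => hlip i (mem_sdiff.1 hi).1 y z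
  have hxH' : ‖gradient (Q k) xH‖ ≤ (2 * a + 1) * (μ * ε) := by
    refine norm_le_of_norm_sum_le (v := fun i => gradient (Q i) xH) ha (fun B hB hBa => ?_) hk
    obtain ⟨⟨y, hy⟩, hdist⟩ := hred B hB hBa
    have hxy : dist xH y ≤ ε := dist_le_of_hausdorffDist_le (hunique H subset_rfl ha.le)
      (hunique B hB hBa) hxH hy hdist
    calc ‖∑ i ∈ B, gradient (Q i) xH‖
        = ‖∑ i ∈ B, gradient (Q i) xH - ∑ i ∈ B, gradient (Q i) y‖ := by
          rw [sum_gradient_eq_zero_of_mem_minimizers (fun i hi => hdiff i (hB hi) y) hy, sub_zero]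
      _ ≤ B.card * (μ * ‖xH - y‖) := norm_sum_sub_sum_le fun i hi => hlip i (hB hi) _ _
      _ ≤ B.card * (μ * ε) := by rw [← dist_eq_norm]; gcongr
  calc ‖gradient (Q k) x‖ ≤ ‖gradient (Q k) xH‖ + ‖gradient (Q k) x - gradient (Q k) xH‖ :=
        norm_le_norm_add_norm_sub' _ _
    _ ≤ (2 * a + 1) * (μ * ε) + μ * ‖x - xH‖ := add_le_add hxH' (hlip k hk x xH)
    _ = μ * ‖x - xH‖ + (2 * a + 1) * (μ * ε) := add_comm _ _

end

-- The constant `4` of the theorem comes from `(2f + r)(2(m - 2f) + 1) ≤ 4(f + r)m`.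
theorem alpha_bound_le {m f r : ℕ} {α γ μ ε t h : ℝ} (hm : 0 < m) (hα : 0 < α) (hγ : 0 < γ)
    (hμ : 0 ≤ μ) (hε : 0 ≤ ε) (ht : 0 ≤ t)
    (hP : α * (m * γ) = h * γ - 2 * (f + r) * μ) :
    α * m * γ * t * (t - 4 * μ * (f + r) * ε / (α * γ)) ≤
      h * γ * t ^ 2 - (2 * f + r) * (μ * t + (2 * (m - 2 * f : ℕ) + 1) * (μ * ε)) * t := by
  have hcount : (2 * f + r) * (2 * (m - 2 * f) + 1) ≤ 4 * (f + r) * m := by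
    rcases le_or_gt (2 * f) m with hfm | hfm
    · obtain ⟨a, rfl⟩ := Nat.exists_eq_add_of_le hfm
      rw [Nat.add_sub_cancel_left]
      rcases Nat.eq_zero_or_pos f with rfl | hf
      · nlinarith
      · nlinarith
    · rw [Nat.sub_eq_zero_of_le hfm.le]
      nlinarith
  have hcount' : ((2 * f + r) * (2 * (m - 2 * f : ℕ) + 1) : ℝ) ≤ 4 * (f + r) * m := by
    exact_mod_cast hcount
  have hlhs : α * m * γ * t * (t - 4 * μ * (f + r) * ε / (α * γ)) =
      h * γ * t ^ 2 - 2 * (f + r) * μ * t ^ 2 - 4 * (f + r) * m * (μ * ε) * t := by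
    field_simp
    linear_combination t ^ 2 * hP
  rw [hlhs]
  nlinarith [mul_le_mul_of_nonneg_right hcount' (by positivity : 0 ≤ μ * ε * t),
    mul_nonneg (mul_nonneg (Nat.cast_nonneg r : (0 : ℝ) ≤ r) hμ) (sq_nonneg t)]

theorem stmt8_general {d n f r : ℕ}
    (H : Finset (Fin n)) (hHcard : H.card + f = n)
    (Q : Fin n → EuclideanSpace ℝ (Fin d) → ℝ) (μ γ ε : ℝ) (hγ : 0 < γ)
    (hdiff : ∀ i ∈ H, ∀ x, DifferentiableAt ℝ (Q i) x)
    -- Assumption 1: each ∇Q_i (i ∈ H) is μ-Lipschitz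
    (hlip : ∀ i ∈ H, ∀ x y : EuclideanSpace ℝ (Fin d),
      ‖gradient (Q i) x - gradient (Q i) y‖ ≤ μ * ‖x - y‖)
    -- Assumption 3: averages over subsets of H of ≥ n−f agents are γ-strongly convex
    (hsc : ∀ S : Finset (Fin n), S ⊆ H → n ≤ S.card + f →
      ∀ x y : EuclideanSpace ℝ (Fin d),
        γ * ‖x - y‖ ^ 2 ≤
          ⟪(S.card : ℝ)⁻¹ •
              (∑ j ∈ S, gradient (Q j) x - ∑ j ∈ S, gradient (Q j) y), x - y⟫)
    -- (f,r;ε)-redundancy of the non-faulty cost functions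
    (hred : ∀ S Shat : Finset (Fin n), Shat ⊆ S → S ⊆ H →
      S.card + f = n → n ≤ Shat.card + r + 2 * f →
      ({y : EuclideanSpace ℝ (Fin d) |
          ∀ z, ∑ i ∈ S, Q i y ≤ ∑ i ∈ S, Q i z}.Nonempty ∧
        {y : EuclideanSpace ℝ (Fin d) |
          ∀ z, ∑ i ∈ Shat, Q i y ≤ ∑ i ∈ Shat, Q i z}.Nonempty ∧
        Metric.hausdorffDist
          {y : EuclideanSpace ℝ (Fin d) | ∀ z, ∑ i ∈ S, Q i y ≤ ∑ i ∈ S, Q i z}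
          {y : EuclideanSpace ℝ (Fin d) |
            ∀ z, ∑ i ∈ Shat, Q i y ≤ ∑ i ∈ Shat, Q i z} ≤ ε))
    -- x_H is the (unique) minimizer of the aggregate non-faulty cost
    (xH : EuclideanSpace ℝ (Fin d))
    (hxH : ∀ z, ∑ j ∈ H, Q j xH ≤ ∑ j ∈ H, Q j z)
    (α : ℝ)
    (hα : α = (((n : ℝ) - f) * γ - 2 * ((f : ℝ) + r) * μ) / (((n : ℝ) - r) * γ))
    (hαpos : 0 < α)
    -- a point x, reported vectors g_j (correct on S ∩ H), and a CGE(m,f) selection T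
    (x : EuclideanSpace ℝ (Fin d))
    (S : Finset (Fin n)) (hScard : S.card + r = n)
    (g : Fin n → EuclideanSpace ℝ (Fin d))
    (hg : ∀ j ∈ S ∩ H, g j = gradient (Q j) x)
    (T : Finset (Fin n)) (hTS : T ⊆ S) (hTcard : T.card + f + r = n)
    (hord : ∀ j ∈ T, ∀ k ∈ S \ T, ‖g j‖ ≤ ‖g k‖) :
    α * ((n : ℝ) - r) * γ * ‖x - xH‖ *
        (‖x - xH‖ - 4 * μ * ((f : ℝ) + r) * ε / (α * γ)) ≤
      ⟪x - xH, ∑ j ∈ T, g j⟫ := by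
  rcases eq_or_ne x xH with rfl | hne
  · simp
  have hpos : 0 < ‖x - xH‖ := norm_pos_iff.2 (sub_ne_zero.2 hne)
  have hHne : H.Nonempty := by
    rw [nonempty_iff_ne_empty]
    rintro rfl
    have := hsc ∅ subset_rfl (by simp at hHcard; omega) x xH
    simp only [card_empty, sum_empty, sub_self, smul_zero, inner_zero_left] at this
    exact this.not_gt (by positivity)
  have hμ : 0 ≤ μ := by
    obtain ⟨i, hi⟩ := hHne
    exact nonneg_of_mul_nonneg_left ((norm_nonneg _).trans (hlip i hi x xH)) hpos
  have hε : 0 ≤ ε := Metric.hausdorffDist_nonneg.trans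
    (hred H H subset_rfl subset_rfl hHcard (by omega)).2.2
  have hHn : (H.card : ℝ) = n - f := by
    rw [eq_sub_iff_add_eq]; exact_mod_cast hHcard
  have hSn : (S.card : ℝ) = n - r := by
    rw [eq_sub_iff_add_eq]; exact_mod_cast hScard
  have hS : 0 < S.card := by
    refine Nat.pos_of_ne_zero fun h => hαpos.ne' ?_
    rw [hα, ← hSn, h, Nat.cast_zero, zero_mul, div_zero]
  have hP : α * (S.card * γ) = H.card * γ - 2 * (f + r) * μ := by
    rw [hα, hSn, hHn, div_mul_cancel₀ _ (by rw [← hSn]; positivity)]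
  have hsc' : ∀ y z : EuclideanSpace ℝ (Fin d), H.card * γ * ‖y - z‖ ^ 2 ≤
      ⟪∑ i ∈ H, gradient (Q i) y - ∑ i ∈ H, gradient (Q i) z, y - z⟫ := fun y z => by
    have h := hsc H subset_rfl (by omega) y z
    rwa [real_inner_smul_left, le_inv_mul_iff₀ (by exact_mod_cast card_pos.2 hHne),
      ← mul_assoc] at h
  have hHT := (card_sdiff_add_card H T).trans_le (card_le_univ _)
  have hTH := (card_sdiff_add_card T H).trans_le (card_le_univ _)
  rw [Fintype.card_fin] at hHT hTH
  set a := S.card - 2 * f with ha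
  have hC : ∀ k ∈ H \ T, ‖gradient (Q k) x‖ ≤ μ * ‖x - xH‖ + (2 * a + 1) * (μ * ε) := by
    intro k hk
    have hHT_pos := card_pos.2 ⟨k, hk⟩
    have hHT_le := card_le_card (sdiff_subset : H \ T ⊆ H)
    -- `#H - a ≤ f + r`, while `2 (f + r) μ < #H γ` because `α > 0`
    have hSa : (S.card : ℝ) ≤ a + 2 * f := by exact_mod_cast (by omega : S.card ≤ a + 2 * f)
    have hαSγ : 0 < α * (S.card * γ) := by positivity
    refine norm_gradient_le_of_redundancy (a := a) hμ (by omega) (by nlinarith) hdiff hlip hsc'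
      (fun B hB hBa => (hred H B hB subset_rfl hHcard (by omega)).2) hxH (mem_sdiff.1 hk).1 x
  have hsel := inner_sum_sub_le_inner_sum_of_cge (u := fun j => gradient (Q j) x) hTS
    (by simp only [card_compl, Fintype.card_fin, card_sdiff_of_subset hTS]; omega) hg hord hC
    (x - xH)
  have hHx : H.card * γ * ‖x - xH‖ ^ 2 ≤ ⟪x - xH, ∑ j ∈ H, gradient (Q j) x⟫ := by
    have h := hsc' x xH
    rwa [sum_gradient_eq_zero_of_mem_minimizers (fun i hi => hdiff i hi xH) hxH, sub_zero,
      real_inner_comm] at h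
  have hcard : ((H \ T).card + (T \ H).card : ℝ) ≤ 2 * f + r := by
    exact_mod_cast (by omega : (H \ T).card + (T \ H).card ≤ 2 * f + r)
  rw [← hSn]
  calc _ ≤ H.card * γ * ‖x - xH‖ ^ 2 -
        (2 * f + r) * (μ * ‖x - xH‖ + (2 * a + 1) * (μ * ε)) * ‖x - xH‖ :=
        alpha_bound_le hS hαpos hγ hμ hε hpos.le hP
    _ ≤ H.card * γ * ‖x - xH‖ ^ 2 - ((H \ T).card + (T \ H).card) *
        (μ * ‖x - xH‖ + (2 * a + 1) * (μ * ε)) * ‖x - xH‖ := by gcongr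
    _ ≤ ⟪x - xH, ∑ j ∈ T, g j⟫ := by linarith

/-- lower bound on ⟨x − x_H, Σ_{j∈T} g_j⟩ for a CGE(m,f) selection T,
under Assumptions 1 and 3 and (f,r;ε)-redundancy (m := n−r). -/
theorem stmt8 {d n f r : ℕ} (hd : 1 ≤ d)
    (H : Finset (Fin n)) (hHcard : H.card + f = n)
    (Q : Fin n → EuclideanSpace ℝ (Fin d) → ℝ) (μ γ ε : ℝ) (hγ : 0 < γ)
    (hdiff : ∀ i ∈ H, ∀ x, DifferentiableAt ℝ (Q i) x)
    -- Assumption 1: each ∇Q_i (i ∈ H) is μ-Lipschitz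
    (hlip : ∀ i ∈ H, ∀ x y : EuclideanSpace ℝ (Fin d),
      ‖gradient (Q i) x - gradient (Q i) y‖ ≤ μ * ‖x - y‖)
    -- Assumption 3: averages over subsets of H of ≥ n−f agents are γ-strongly convex
    (hsc : ∀ S : Finset (Fin n), S ⊆ H → n ≤ S.card + f →
      ∀ x y : EuclideanSpace ℝ (Fin d),
        γ * ‖x - y‖ ^ 2 ≤
          ⟪(S.card : ℝ)⁻¹ •
              (∑ j ∈ S, gradient (Q j) x - ∑ j ∈ S, gradient (Q j) y), x - y⟫)
    -- (f,r;ε)-redundancy of the non-faulty cost functions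
    (hred : ∀ S Shat : Finset (Fin n), Shat ⊆ S → S ⊆ H →
      S.card + f = n → n ≤ Shat.card + r + 2 * f →
      ({y : EuclideanSpace ℝ (Fin d) |
          ∀ z, ∑ i ∈ S, Q i y ≤ ∑ i ∈ S, Q i z}.Nonempty ∧
        {y : EuclideanSpace ℝ (Fin d) |
          ∀ z, ∑ i ∈ Shat, Q i y ≤ ∑ i ∈ Shat, Q i z}.Nonempty ∧
        Metric.hausdorffDist
          {y : EuclideanSpace ℝ (Fin d) | ∀ z, ∑ i ∈ S, Q i y ≤ ∑ i ∈ S, Q i z}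
          {y : EuclideanSpace ℝ (Fin d) |
            ∀ z, ∑ i ∈ Shat, Q i y ≤ ∑ i ∈ Shat, Q i z} ≤ ε))
    -- x_H is the (unique) minimizer of the aggregate non-faulty cost
    (xH : EuclideanSpace ℝ (Fin d))
    (hxH : ∀ z, ∑ j ∈ H, Q j xH ≤ ∑ j ∈ H, Q j z)
    (α : ℝ)
    (hα : α = (((n : ℝ) - f) * γ - 2 * ((f : ℝ) + r) * μ) / (((n : ℝ) - r) * γ))
    (hαpos : 0 < α)
    -- a point x, reported vectors g_j (correct on S ∩ H), and a CGE(m,f) selection T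
    (x : EuclideanSpace ℝ (Fin d))
    (S : Finset (Fin n)) (hScard : S.card + r = n)
    (g : Fin n → EuclideanSpace ℝ (Fin d))
    (hg : ∀ j ∈ S ∩ H, g j = gradient (Q j) x)
    (T : Finset (Fin n)) (hTS : T ⊆ S) (hTcard : T.card + f + r = n)
    (hord : ∀ j ∈ T, ∀ k ∈ S \ T, ‖g j‖ ≤ ‖g k‖) :
    α * ((n : ℝ) - r) * γ * ‖x - xH‖ *
        (‖x - xH‖ - 4 * μ * ((f : ℝ) + r) * ε / (α * γ)) ≤
      ⟪x - xH, ∑ j ∈ T, g j⟫ :=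
  stmt8_general H hHcard Q μ γ ε hγ hdiff hlip hsc hred xH hxH α hα hαpos x S hScard g hg T hTS
    hTcard hord
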